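/- Let H be a 3-partite 3-graph with ν(H) = 1 and τ(H) = 2. Then H is a home-base hypergraph. -/

import Mathlib

/-!
Since `ν(H) = 1`, any two edges meet, hence agree in some coordinate; since `τ(H) = 2`, no
vertex lies on every edge. Fix an edge `abc`. If every edge meets `{a, b, c}` in two vertices,
then `𝓡 = {{a, b, c}}` is a home-base partition: an edge missing the class-`i` vertex of `R`
provides the partner of `R` in `B_i`. Otherwise some edge meets `abc` in a single vertex; after
rotating the vertex classes it is `aqr`. Every edge avoiding `a` must meet both `abc` and `aqr`,
so it has the form `·br` or `·qc`. If both forms occur, their first vertices coincide and the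
distinct edges are exactly `abc, aqr, xbr, xqc`: a truncated multi-Fano plane. If only one form
occurs, `{a, b, r}` or `{a, q, c}` meets every edge in two vertices and serves as `R`.
-/

noncomputable section

attribute [local instance] Classical.propDecidable

universe u

variable {α : Type u}

/-- A 3-partite 3-uniform multihypergraph: vertex classes `V1, V2, V3` and a
multiset of edges, each edge being a triple with one vertex in each class
(parallel edges are allowed via multiplicities). -/
structure TriSys (α : Type u) where
  V1 : Finset α
  V2 : Finset α
  V3 : Finset α
  h12 : Disjoint V1 V2
  h13 : Disjoint V1 V3
  h23 : Disjoint V2 V3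
  edges : Multiset (α × α × α)
  mem1 : ∀ e ∈ edges, e.1 ∈ V1
  mem2 : ∀ e ∈ edges, e.2.1 ∈ V2
  mem3 : ∀ e ∈ edges, e.2.2 ∈ V3

/-- The vertex set of an edge. -/
def evset (e : α × α × α) : Finset α := {e.1, e.2.1, e.2.2}

/-- The coordinates of an edge, indexed by `Fin 3`. -/
def ecoord (e : α × α × α) : Fin 3 → α := ![e.1, e.2.1, e.2.2]

namespace TriSys

def verts (H : TriSys α) : Finset α := H.V1 ∪ H.V2 ∪ H.V3

/-- The vertex classes, indexed by `Fin 3`. -/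
def cls (H : TriSys α) : Fin 3 → Finset α := ![H.V1, H.V2, H.V3]

/-- A matching: a set of (pairwise vertex-disjoint) edges. -/
def IsMatching (H : TriSys α) (M : Finset (α × α × α)) : Prop :=
  (∀ e ∈ M, e ∈ H.edges) ∧
  (↑M : Set (α × α × α)).Pairwise fun e f => Disjoint (evset e) (evset f)

/-- The matching number ν. -/
def nu (H : TriSys α) : ℕ :=
  sSup {n : ℕ | ∃ M : Finset (α × α × α), H.IsMatching M ∧ M.card = n}

/-- A vertex cover: a set of vertices meeting every edge. -/
def IsCover (H : TriSys α) (T : Finset α) : Prop :=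
  ∀ e ∈ H.edges, ∃ v ∈ T, v ∈ evset e

/-- The vertex cover number τ. -/
def tau (H : TriSys α) : ℕ :=
  sInf {n : ℕ | ∃ T : Finset α, H.IsCover T ∧ T.card = n}

/-- Deletion of a set of vertices (and all edges meeting it). -/
def delete (H : TriSys α) (S : Finset α) : TriSys α where
  V1 := H.V1 \ S
  V2 := H.V2 \ S
  V3 := H.V3 \ S
  h12 := H.h12.mono Finset.sdiff_subset Finset.sdiff_subset
  h13 := H.h13.mono Finset.sdiff_subset Finset.sdiff_subset
  h23 := H.h23.mono Finset.sdiff_subset Finset.sdiff_subset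
  edges := H.edges.filter fun e => e.1 ∉ S ∧ e.2.1 ∉ S ∧ e.2.2 ∉ S
  mem1 := fun e he => by
    rw [Multiset.mem_filter] at he
    exact Finset.mem_sdiff.mpr ⟨H.mem1 e he.1, he.2.1⟩
  mem2 := fun e he => by
    rw [Multiset.mem_filter] at he
    exact Finset.mem_sdiff.mpr ⟨H.mem2 e he.1, he.2.2.1⟩
  mem3 := fun e he => by
    rw [Multiset.mem_filter] at he
    exact Finset.mem_sdiff.mpr ⟨H.mem3 e he.1, he.2.2.2⟩

end TriSys

/-- The four edges of a truncated Fano plane on vertices `a,b,c,x,y,z`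
(with classes `{a,x} ⊆ V1`, `{b,y} ⊆ V2`, `{c,z} ⊆ V3`). -/
def FanoEdges (a b c x y z : α) : Finset (α × α × α) :=
  {(a, b, c), (a, y, z), (x, b, z), (x, y, c)}

/-- The supports of the edges of `H` induced on a vertex subset `F`. -/
def inducedEdges (H : TriSys α) (F : Finset α) : Finset (α × α × α) :=
  (H.edges.filter fun e => evset e ⊆ F).toFinset

/-- `H` induces a truncated multi-Fano plane on the six-element set `F`. -/
def IsMultiFano (H : TriSys α) (F : Finset α) : Prop :=
  ∃ a b c x y z : α,
    a ∈ H.V1 ∧ x ∈ H.V1 ∧ b ∈ H.V2 ∧ y ∈ H.V2 ∧ c ∈ H.V3 ∧ z ∈ H.V3 ∧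
    a ≠ x ∧ b ≠ y ∧ c ≠ z ∧
    F = {a, b, c, x, y, z} ∧
    inducedEdges H F = FanoEdges a b c x y z

/-- The data of an FR-partition: the families `𝓕` and `𝓡` and the set `W`. -/
structure FRData (α : Type u) where
  Ffam : Finset (Finset α)
  Rfam : Finset (Finset α)
  W : Finset α

/-- The union of the members of a family of sets. -/
def famUnion (G : Finset (Finset α)) : Finset α := G.biUnion id

/-- `(𝓕, 𝓡, W)` is an FR-partition of `H`. -/
def IsFRPartition (H : TriSys α) (P : FRData α) : Prop :=
  (∀ A ∈ P.Ffam, ∀ B ∈ P.Ffam, A ≠ B → Disjoint A B) ∧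
  (∀ A ∈ P.Rfam, ∀ B ∈ P.Rfam, A ≠ B → Disjoint A B) ∧
  (∀ A ∈ P.Ffam, ∀ B ∈ P.Rfam, Disjoint A B) ∧
  (∀ A ∈ P.Ffam, Disjoint A P.W) ∧
  (∀ B ∈ P.Rfam, Disjoint B P.W) ∧
  famUnion P.Ffam ∪ famUnion P.Rfam ∪ P.W = H.verts ∧
  (∀ A ∈ P.Ffam, IsMultiFano H A) ∧
  (∀ B ∈ P.Rfam, ∃ r1 ∈ H.V1, ∃ r2 ∈ H.V2, ∃ r3 ∈ H.V3, B = {r1, r2, r3}) ∧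
  P.Ffam.card + P.Rfam.card = H.nu

/-- `w` is joined to `R` in the auxiliary bipartite graph `B_i`: some edge of
`H` contains `w` and two vertices of `R`. -/
def RAdj (H : TriSys α) (R : Finset α) (w : α) : Prop :=
  ∃ e ∈ H.edges, w ∈ evset e ∧ 2 ≤ (evset e ∩ R).card

/-- The auxiliary bipartite graph on `Rfam` and `Wi` has a matching
saturating `Rfam`. -/
def SaturatingR (H : TriSys α) (Rfam : Finset (Finset α)) (Wi : Finset α) : Prop :=
  ∃ f : Finset α → α, Set.InjOn f ↑Rfam ∧ ∀ R ∈ Rfam, f R ∈ Wi ∧ RAdj H R (f R)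

/-- Matchability of an FR-partition. -/
def IsMatchable (H : TriSys α) (P : FRData α) : Prop :=
  ∀ i : Fin 3, SaturatingR H P.Rfam (P.W ∩ H.cls i)

/-- The edge-home property: every edge is an `F`-edge or an `R`-edge. -/
def EdgeHome (H : TriSys α) (P : FRData α) : Prop :=
  ∀ e ∈ H.edges,
    (∃ A ∈ P.Ffam, evset e ⊆ A) ∨ (∃ B ∈ P.Rfam, 2 ≤ (evset e ∩ B).card)

/-- A home-base partition: a matchable FR-partition with the edge-home
property. -/
def IsHomeBasePartition (H : TriSys α) (P : FRData α) : Prop :=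
  IsFRPartition H P ∧ IsMatchable H P ∧ EdgeHome H P

/-- A home-base hypergraph: one admitting a home-base partition. -/
def IsHomeBase (H : TriSys α) : Prop :=
  ∃ P : FRData α, IsHomeBasePartition H P

/-- The neighborhood of a family `U` of `R`'s in the auxiliary bipartite
graph with `W`-side `Wi`. -/
def RNbhd (H : TriSys α) (Wi : Finset α) (U : Finset (Finset α)) : Finset α :=
  Wi.filter fun w => ∃ R ∈ U, RAdj H R w

/-- `C` is an essential subset of `Wi` in the auxiliary bipartite graph:
`C = N(U)` for some `U ⊆ Rfam` with `|U| = |C|`. -/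
def EssentialSet (H : TriSys α) (Rfam : Finset (Finset α)) (Wi : Finset α)
    (C : Finset α) : Prop :=
  ∃ U ⊆ Rfam, U.card = C.card ∧ RNbhd H Wi U = C

/-- `w` is a superfluous vertex of `Wi`: it lies in no essential subset
(equivalently, outside the maximal essential subset). -/
def Superfluous (H : TriSys α) (Rfam : Finset (Finset α)) (Wi : Finset α)
    (w : α) : Prop :=
  w ∈ Wi ∧ ∀ C, EssentialSet H Rfam Wi C → w ∉ C

/-- `w` is a superfluous `W`-vertex of the FR-partition `P` (in its class). -/
def SuperfluousVert (H : TriSys α) (P : FRData α) (w : α) : Prop :=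
  ∃ i : Fin 3, Superfluous H P.Rfam (P.W ∩ H.cls i) w

/-- `v` is an essential `W`-vertex of the FR-partition `P`. -/
def EssentialVertIn (H : TriSys α) (P : FRData α) (v : α) : Prop :=
  ∃ i : Fin 3, EssentialSet H P.Rfam (P.W ∩ H.cls i) {v}

/-- `v` is essential for `R`: it is the unique neighbor of `R` in some `B_i`. -/
def EssentialForIn (H : TriSys α) (P : FRData α) (R : Finset α) (v : α) : Prop :=
  ∃ i : Fin 3, RNbhd H (P.W ∩ H.cls i) {R} = {v}

/-- The neighborhood, inside vertex class `j`, of a set `X` of class-`k`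
vertices in the link graph of `H` over the remaining vertex class. -/
def nbr (H : TriSys α) (j k : Fin 3) (X : Finset α) : Finset α :=
  (H.cls j).filter fun v => ∃ e ∈ H.edges, ecoord e j = v ∧ ecoord e k ∈ X

/-- A cromulent triple `(Y1, Y2, X)` with `Y1 ⊆ V_i`, `Y2 ⊆ V_j`, `X ⊆ V_k`. -/
def IsCromulent (H : TriSys α) (i j k : Fin 3) (Y1 Y2 X : Finset α) : Prop :=
  i ≠ j ∧ i ≠ k ∧ j ≠ k ∧
  Y1.Nonempty ∧ Y2.Nonempty ∧ X.Nonempty ∧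
  Y1 ⊆ H.cls i ∧ Y2 ⊆ H.cls j ∧ X ⊆ H.cls k ∧
  Y1.card = Y2.card ∧ Y1.card ≤ X.card ∧
  nbr H j k X = Y2 ∧
  (∃ M : Finset (α × α × α), H.IsMatching M ∧ M.card = Y1.card ∧
    ∀ e ∈ M, evset e ⊆ Y1 ∪ Y2 ∪ X) ∧
  IsHomeBase (H.delete (Y1 ∪ Y2 ∪ X)) ∧
  (H.delete (Y1 ∪ Y2 ∪ X)).nu + Y1.card = H.nu ∧
  ∀ P : FRData α, IsHomeBasePartition (H.delete (Y1 ∪ Y2 ∪ X)) P →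
    nbr H i k X ⊆ Y1 ∪ famUnion P.Rfam ∪ famUnion P.Ffam

/-- A perfectly cromulent triple: condition (5) is strengthened to
`N_{Lk_{V_j}}(X) = Y1`. -/
def IsPerfCromulent (H : TriSys α) (i j k : Fin 3) (Y1 Y2 X : Finset α) : Prop :=
  i ≠ j ∧ i ≠ k ∧ j ≠ k ∧
  Y1.Nonempty ∧ Y2.Nonempty ∧ X.Nonempty ∧
  Y1 ⊆ H.cls i ∧ Y2 ⊆ H.cls j ∧ X ⊆ H.cls k ∧
  Y1.card = Y2.card ∧ Y1.card ≤ X.card ∧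
  nbr H j k X = Y2 ∧
  (∃ M : Finset (α × α × α), H.IsMatching M ∧ M.card = Y1.card ∧
    ∀ e ∈ M, evset e ⊆ Y1 ∪ Y2 ∪ X) ∧
  IsHomeBase (H.delete (Y1 ∪ Y2 ∪ X)) ∧
  (H.delete (Y1 ∪ Y2 ∪ X)).nu + Y1.card = H.nu ∧
  nbr H i k X = Y1

/-- The link graph of `H` over the class other than `j, k` has a perfect
matching, encoded as a bijection from class `j` onto class `k` realized by
edges of `H`. -/
def LinkPerfectMatching (H : TriSys α) (j k : Fin 3) : Prop :=
  ∃ f : α → α, Set.InjOn f ↑(H.cls j) ∧ (H.cls j).image f = H.cls k ∧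
    ∀ v ∈ H.cls j, ∃ e ∈ H.edges, ecoord e j = v ∧ ecoord e k = f v

/-- A proper FR-partition: no `R ∈ 𝓡` together with an edge consisting of
three `W`-vertices induces a truncated (multi-)Fano plane. -/
def IsProper (H : TriSys α) (P : FRData α) : Prop :=
  ¬ ∃ R ∈ P.Rfam, ∃ e ∈ H.edges, evset e ⊆ P.W ∧ IsMultiFano H (R ∪ evset e)

def SharesCoord (e f : α × α × α) : Prop := e.1 = f.1 ∨ e.2.1 = f.2.1 ∨ e.2.2 = f.2.2

lemma mem_fanoEdges_of_sharesCoord {a b c x y z : α} (hax : a ≠ x) (hby : b ≠ y) (hcz : c ≠ z)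
    {g : α × α × α} (h1 : SharesCoord g (a, b, c)) (h2 : SharesCoord g (a, y, z))
    (h3 : SharesCoord g (x, b, z)) (h4 : SharesCoord g (x, y, c)) :
    g ∈ FanoEdges a b c x y z := by
  obtain ⟨u, v, w⟩ := g
  simp only [SharesCoord, FanoEdges, Finset.mem_insert, Finset.mem_singleton,
    Prod.mk.injEq] at *
  grind

def rotTriple (e : α × α × α) : α × α × α := (e.2.1, e.2.2, e.1)

lemma rotTriple_injective : Function.Injective (rotTriple : α × α × α → α × α × α) := by
  rintro ⟨a, b, c⟩ ⟨x, y, z⟩ h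
  simp_all [rotTriple]

lemma evset_rotTriple (e : α × α × α) : evset (rotTriple e) = evset e := by
  ext
  simp only [evset, rotTriple, Finset.mem_insert, Finset.mem_singleton]
  tauto

lemma image_rotTriple_fanoEdges (a b c x y z : α) :
    (FanoEdges c a b z x y).image rotTriple = FanoEdges a b c x y z := by
  simp only [FanoEdges, rotTriple, Finset.image_insert, Finset.image_singleton]
  grind

lemma two_le_card_inter_evset {e : α × α × α} {s : Finset α} {u v : α} (hu : u ∈ evset e)
    (hv : v ∈ evset e) (hus : u ∈ s) (hvs : v ∈ s) (huv : u ≠ v) :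
    2 ≤ (evset e ∩ s).card :=
  Finset.one_lt_card.mpr ⟨u, Finset.mem_inter.mpr ⟨hu, hus⟩, v, Finset.mem_inter.mpr ⟨hv, hvs⟩, huv⟩

namespace TriSys

variable {H : TriSys α}

lemma ne_of_mem_V1_of_mem_V2 {v w : α} (hv : v ∈ H.V1) (hw : w ∈ H.V2) : v ≠ w :=
  Finset.disjoint_iff_ne.mp H.h12 v hv w hw

lemma ne_of_mem_V1_of_mem_V3 {v w : α} (hv : v ∈ H.V1) (hw : w ∈ H.V3) : v ≠ w :=
  Finset.disjoint_iff_ne.mp H.h13 v hv w hw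

lemma ne_of_mem_V2_of_mem_V3 {v w : α} (hv : v ∈ H.V2) (hw : w ∈ H.V3) : v ≠ w :=
  Finset.disjoint_iff_ne.mp H.h23 v hv w hw

lemma sharesCoord_of_not_disjoint {e f : α × α × α} (he : e ∈ H.edges) (hf : f ∈ H.edges)
    (hef : ¬Disjoint (evset e) (evset f)) : SharesCoord e f := by
  obtain ⟨v, hve, hvf⟩ := Finset.not_disjoint_iff.mp hef
  have := H.mem1 e he; have := H.mem2 e he; have := H.mem3 e he
  have := H.mem1 f hf; have := H.mem2 f hf; have := H.mem3 f hf
  have := Finset.disjoint_left.mp H.h12; have := Finset.disjoint_left.mp H.h13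
  have := Finset.disjoint_left.mp H.h23
  simp only [evset, Finset.mem_insert, Finset.mem_singleton] at hve hvf
  grind [SharesCoord]

def IsIntersecting (H : TriSys α) : Prop :=
  ∀ e ∈ H.edges, ∀ f ∈ H.edges, ¬Disjoint (evset e) (evset f)

lemma IsIntersecting.sharesCoord (hI : H.IsIntersecting) {e f : α × α × α} (he : e ∈ H.edges)
    (hf : f ∈ H.edges) : SharesCoord e f :=
  sharesCoord_of_not_disjoint he hf (hI e he f hf)

lemma isIntersecting_of_nu_le_one (hnu : H.nu ≤ 1) : H.IsIntersecting := by
  intro e he f hf hdisj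
  have hef : e ≠ f := by
    rintro rfl
    exact Finset.insert_ne_empty _ _ (disjoint_self.mp hdisj)
  have hM : H.IsMatching {e, f} := by
    refine ⟨by simp [he, hf], ?_⟩
    simp only [Finset.coe_insert, Finset.coe_singleton]
    exact Set.pairwise_pair.mpr fun _ => ⟨hdisj, hdisj.symm⟩
  have hbdd : BddAbove {n | ∃ M, H.IsMatching M ∧ M.card = n} := by
    refine ⟨H.edges.toFinset.card, ?_⟩
    rintro n ⟨M, hM, rfl⟩
    exact Finset.card_le_card fun g hg => Multiset.mem_toFinset.mpr (hM.1 g hg)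
  have : 2 ≤ H.nu := le_csSup hbdd ⟨{e, f}, hM, Finset.card_pair hef⟩
  omega

lemma exists_mem_edges_of_tau_pos (htau : 0 < H.tau) : ∃ e, e ∈ H.edges := by
  by_contra! h
  have : H.tau ≤ 0 := Nat.sInf_le ⟨∅, fun e he => absurd he (h e), rfl⟩
  omega

def NoCoveringVertex (H : TriSys α) : Prop :=
  ∀ v, ∃ e ∈ H.edges, v ∉ evset e

lemma noCoveringVertex_of_one_lt_tau (htau : 1 < H.tau) : H.NoCoveringVertex := by
  intro v
  by_contra! h
  have : H.tau ≤ 1 := Nat.sInf_le ⟨{v}, fun e he => ⟨v, Finset.mem_singleton_self v, h e he⟩,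
    Finset.card_singleton v⟩
  omega

def rotate (H : TriSys α) : TriSys α where
  V1 := H.V2
  V2 := H.V3
  V3 := H.V1
  h12 := H.h23
  h13 := H.h12.symm
  h23 := H.h13.symm
  edges := H.edges.map rotTriple
  mem1 := Multiset.forall_mem_map_iff.mpr fun e he => H.mem2 e he
  mem2 := Multiset.forall_mem_map_iff.mpr fun e he => H.mem3 e he
  mem3 := Multiset.forall_mem_map_iff.mpr fun e he => H.mem1 e he

lemma mk_mem_rotate_edges {a b c : α} (h : (a, b, c) ∈ H.edges) : (b, c, a) ∈ H.rotate.edges :=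
  Multiset.mem_map_of_mem rotTriple h

lemma IsIntersecting.rotate (hI : H.IsIntersecting) : H.rotate.IsIntersecting := by
  simpa only [IsIntersecting, TriSys.rotate, Multiset.forall_mem_map_iff, evset_rotTriple]
    using hI

lemma NoCoveringVertex.rotate (hτ : H.NoCoveringVertex) : H.rotate.NoCoveringVertex := by
  intro v
  obtain ⟨e, he, hv⟩ := hτ v
  exact ⟨rotTriple e, Multiset.mem_map_of_mem rotTriple he, by rwa [evset_rotTriple]⟩

def IsHomeTriple (H : TriSys α) (r1 r2 r3 : α) : Prop :=
  r1 ∈ H.V1 ∧ r2 ∈ H.V2 ∧ r3 ∈ H.V3 ∧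
    ∀ e ∈ H.edges, 2 ≤ (evset e ∩ {r1, r2, r3}).card

def IsFanoOn (H : TriSys α) (a b c x y z : α) : Prop :=
  a ≠ x ∧ b ≠ y ∧ c ≠ z ∧ H.edges.toFinset = FanoEdges a b c x y z

def HasSingleHomeBlock (H : TriSys α) : Prop :=
  (∃ r1 r2 r3, H.IsHomeTriple r1 r2 r3) ∨ ∃ a b c x y z, H.IsFanoOn a b c x y z

lemma IsHomeTriple.of_rotate {r1 r2 r3 : α} (h : H.rotate.IsHomeTriple r1 r2 r3) :
    H.IsHomeTriple r3 r1 r2 := by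
  obtain ⟨h1, h2, h3, hcov⟩ := h
  refine ⟨h3, h1, h2, fun e he => ?_⟩
  rw [show ({r3, r1, r2} : Finset α) = {r1, r2, r3} by grind, ← evset_rotTriple]
  exact hcov _ (Multiset.mem_map_of_mem rotTriple he)

lemma IsFanoOn.of_rotate {a b c x y z : α} (h : H.rotate.IsFanoOn a b c x y z) :
    H.IsFanoOn c a b z x y := by
  obtain ⟨hax, hby, hcz, hedges⟩ := h
  refine ⟨hcz, hax, hby, Finset.image_injective rotTriple_injective ?_⟩
  rw [image_rotTriple_fanoEdges, ← hedges, ← Multiset.toFinset_map]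
  rfl

lemma HasSingleHomeBlock.of_rotate (h : H.rotate.HasSingleHomeBlock) : H.HasSingleHomeBlock := by
  rcases h with ⟨r1, r2, r3, hR⟩ | ⟨a, b, c, x, y, z, hF⟩
  · exact Or.inl ⟨_, _, _, hR.of_rotate⟩
  · exact Or.inr ⟨_, _, _, _, _, _, hF.of_rotate⟩

lemma isHomeTriple_of_forall_fst_ne (hI : H.IsIntersecting) {a b r : α} (ha : a ∈ H.V1)
    (havoid : ∃ g ∈ H.edges, a ∉ evset g)
    (hoff : ∀ g ∈ H.edges, g.1 ≠ a → g.2.1 = b ∧ g.2.2 = r) :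
    H.IsHomeTriple a b r := by
  obtain ⟨g, hg, hag⟩ := havoid
  have hga : g.1 ≠ a := fun h => hag (by simp [evset, h])
  obtain ⟨hgb, hgr⟩ := hoff g hg hga
  have hb : b ∈ H.V2 := hgb ▸ H.mem2 g hg
  have hr : r ∈ H.V3 := hgr ▸ H.mem3 g hg
  have hab := ne_of_mem_V1_of_mem_V2 ha hb
  have har := ne_of_mem_V1_of_mem_V3 ha hr
  have hbr := ne_of_mem_V2_of_mem_V3 hb hr
  refine ⟨ha, hb, hr, fun e he => ?_⟩
  by_cases hea : e.1 = a
  · rcases hI.sharesCoord he hg with h | h | h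
    · exact absurd (h ▸ hea) hga
    · exact two_le_card_inter_evset (u := a) (v := b) (by simp [evset, hea])
        (by simp [evset, h, hgb]) (by simp) (by simp) hab
    · exact two_le_card_inter_evset (u := a) (v := r) (by simp [evset, hea])
        (by simp [evset, h, hgr]) (by simp) (by simp) har
  · obtain ⟨heb, her⟩ := hoff e he hea
    exact two_le_card_inter_evset (u := b) (v := r) (by simp [evset, heb])
      (by simp [evset, her]) (by simp) (by simp) hbr

lemma hasSingleHomeBlock_of_meet_only_fst (hI : H.IsIntersecting)
    (hτ : H.NoCoveringVertex) {a b c q r : α} (he : (a, b, c) ∈ H.edges)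
    (hf : (a, q, r) ∈ H.edges) (hqb : q ≠ b) (hrc : r ≠ c) :
    H.HasSingleHomeBlock := by
  have ha : a ∈ H.V1 := H.mem1 _ he
  have hoff : ∀ g ∈ H.edges, g.1 ≠ a → (g.2.1 = b ∧ g.2.2 = r) ∨ (g.2.1 = q ∧ g.2.2 = c) := by
    intro g hg hga
    have h1 := hI.sharesCoord hg he
    have h2 := hI.sharesCoord hg hf
    simp only [SharesCoord] at h1 h2
    grind
  by_cases hqc : ∃ x ≠ a, (x, q, c) ∈ H.edges
  · by_cases hbr : ∃ x ≠ a, (x, b, r) ∈ H.edges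
    · obtain ⟨x, hxa, hg⟩ := hqc
      obtain ⟨x', hxa', hg'⟩ := hbr
      obtain rfl : x = x' := by
        rcases hI.sharesCoord hg' hg with h | h | h
        · exact h.symm
        · exact absurd h.symm hqb
        · exact absurd h hrc
      refine Or.inr ⟨a, b, c, x, q, r, hxa.symm, hqb.symm, hrc.symm, ?_⟩
      ext g
      rw [Multiset.mem_toFinset]
      refine ⟨fun hg₀ => mem_fanoEdges_of_sharesCoord hxa.symm hqb.symm hrc.symm
        (hI.sharesCoord hg₀ he) (hI.sharesCoord hg₀ hf) (hI.sharesCoord hg₀ hg')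
        (hI.sharesCoord hg₀ hg), fun hg₀ => ?_⟩
      simp only [FanoEdges, Finset.mem_insert, Finset.mem_singleton] at hg₀
      rcases hg₀ with rfl | rfl | rfl | rfl <;> assumption
    · refine Or.inl ⟨a, q, c, isHomeTriple_of_forall_fst_ne hI ha (hτ a) fun g hg hga => ?_⟩
      exact (hoff g hg hga).resolve_left fun ⟨h2, h3⟩ => hbr ⟨g.1, hga, by rwa [← h2, ← h3]⟩
  · refine Or.inl ⟨a, b, r, isHomeTriple_of_forall_fst_ne hI ha (hτ a) fun g hg hga => ?_⟩
    exact (hoff g hg hga).resolve_right fun ⟨h2, h3⟩ => hqc ⟨g.1, hga, by rwa [← h2, ← h3]⟩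

lemma hasSingleHomeBlock_of_isIntersecting (hI : H.IsIntersecting)
    (hτ : H.NoCoveringVertex) {e : α × α × α} (he : e ∈ H.edges) :
    H.HasSingleHomeBlock := by
  obtain ⟨a, b, c⟩ := e
  by_cases hR : H.IsHomeTriple a b c
  · exact Or.inl ⟨a, b, c, hR⟩
  obtain ⟨⟨p, q, r⟩, hf, hlt⟩ : ∃ f ∈ H.edges, (evset f ∩ {a, b, c}).card < 2 := by
    simpa [IsHomeTriple, H.mem1 _ he, H.mem2 _ he, H.mem3 _ he] using hR
  have ha : a ∈ H.V1 := H.mem1 _ he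
  have hb : b ∈ H.V2 := H.mem2 _ he
  have hc : c ∈ H.V3 := H.mem3 _ he
  have hab := ne_of_mem_V1_of_mem_V2 ha hb
  have hac := ne_of_mem_V1_of_mem_V3 ha hc
  have hbc := ne_of_mem_V2_of_mem_V3 hb hc
  have hone := Finset.card_le_one.mp (Nat.lt_succ_iff.mp hlt)
  simp only [Finset.mem_inter, evset, Finset.mem_insert, Finset.mem_singleton] at hone
  rcases hI.sharesCoord he hf with h | h | h <;> dsimp only at h <;> subst h
  · exact hasSingleHomeBlock_of_meet_only_fst hI hτ he hf
      (fun h => hab (hone a (by simp) b (by simp [h])))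
      (fun h => hac (hone a (by simp) c (by simp [h])))
  · exact (hasSingleHomeBlock_of_meet_only_fst hI.rotate hτ.rotate
      (mk_mem_rotate_edges he) (mk_mem_rotate_edges hf)
      (fun h => hbc (hone b (by simp) c (by simp [h])))
      (fun h => hab (hone a (by simp [h]) b (by simp)))).of_rotate
  · exact (hasSingleHomeBlock_of_meet_only_fst hI.rotate.rotate
      hτ.rotate.rotate
      (mk_mem_rotate_edges (mk_mem_rotate_edges he))
      (mk_mem_rotate_edges (mk_mem_rotate_edges hf))
      (fun h => hac (hone a (by simp [h]) c (by simp)))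
      (fun h => hbc (hone b (by simp [h]) c (by simp)))).of_rotate.of_rotate

lemma isHomeBase_of_isHomeTriple (hnu : H.nu = 1) (hτ : H.NoCoveringVertex)
    {r1 r2 r3 : α} (hR : H.IsHomeTriple r1 r2 r3) : IsHomeBase H := by
  obtain ⟨h1, h2, h3, hcov⟩ := hR
  set R : Finset α := {r1, r2, r3} with hRdef
  have hRsub : R ⊆ H.verts := by
    simp only [hRdef, verts, Finset.insert_subset_iff, Finset.singleton_subset_iff,
      Finset.mem_union]
    tauto
  refine ⟨⟨∅, {R}, H.verts \ R⟩,
    ⟨by simp, by simp, by simp, by simp, by simp [Finset.disjoint_sdiff], ?_, by simp,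
      fun B hB => ⟨r1, h1, r2, h2, r3, h3, Finset.mem_singleton.mp hB⟩, by simp [hnu]⟩,
    fun i => ?_, fun e he => Or.inr ⟨R, Finset.mem_singleton_self R, hcov e he⟩⟩
  · simpa [famUnion] using Finset.union_sdiff_of_subset hRsub
  obtain ⟨g, hg, hgr⟩ := hτ (![r1, r2, r3] i)
  refine ⟨fun _ => ecoord g i, by simp, fun R' hR' => ?_⟩
  rw [Finset.mem_singleton.mp hR']
  have := H.mem1 g hg; have := H.mem2 g hg; have := H.mem3 g hg
  have := Finset.disjoint_left.mp H.h12; have := Finset.disjoint_left.mp H.h13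
  have := Finset.disjoint_left.mp H.h23
  refine ⟨?_, g, hg, ?_, hcov g hg⟩ <;> fin_cases i <;>
    simp_all [ecoord, evset, cls, verts] <;> grind

lemma isHomeBase_of_isFanoOn (hnu : H.nu = 1) {a b c x y z : α}
    (hF : H.IsFanoOn a b c x y z) : IsHomeBase H := by
  obtain ⟨hax, hby, hcz, hedges⟩ := hF
  have hmem : ∀ g ∈ FanoEdges a b c x y z, g ∈ H.edges := fun g hg =>
    Multiset.mem_toFinset.mp (hedges ▸ hg)
  set F : Finset α := {a, b, c, x, y, z} with hFdef
  have hsub : ∀ g ∈ H.edges, evset g ⊆ F := by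
    intro g hg
    have : g ∈ FanoEdges a b c x y z := hedges ▸ Multiset.mem_toFinset.mpr hg
    simp only [FanoEdges, Finset.mem_insert, Finset.mem_singleton] at this
    rcases this with rfl | rfl | rfl | rfl <;> grind [evset]
  have habc := hmem (a, b, c) (by simp [FanoEdges])
  have hxyc := hmem (x, y, c) (by simp [FanoEdges])
  have hayz := hmem (a, y, z) (by simp [FanoEdges])
  have hFsub : F ⊆ H.verts := by
    have := H.mem1 _ habc; have := H.mem2 _ habc; have := H.mem3 _ habc
    have := H.mem1 _ hxyc; have := H.mem2 _ hxyc; have := H.mem3 _ hayz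
    simp only [hFdef, verts, Finset.insert_subset_iff, Finset.singleton_subset_iff,
      Finset.mem_union]
    simp_all
  have hmf : IsMultiFano H F := by
    refine ⟨a, b, c, x, y, z, H.mem1 _ habc, H.mem1 _ hxyc, H.mem2 _ habc, H.mem2 _ hxyc,
      H.mem3 _ habc, H.mem3 _ hayz, hax, hby, hcz, rfl, ?_⟩
    rw [inducedEdges, Multiset.filter_eq_self.mpr hsub, hedges]
  refine ⟨⟨{F}, ∅, H.verts \ F⟩, ⟨by simp, by simp, by simp, by simp [Finset.disjoint_sdiff],
    by simp, ?_, by simpa using hmf, by simp, by simp [hnu]⟩,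
    fun i => ⟨fun _ => a, by simp, by simp⟩, fun e he => Or.inl ⟨F, by simp, hsub e he⟩⟩
  simpa [famUnion] using Finset.union_sdiff_of_subset hFsub

end TriSys

/-- A 3-partite 3-graph with `ν(H) = 1` and `τ(H) = 2` is a home-base
hypergraph. -/
theorem base_case_nu_one (H : TriSys α) (hnu : H.nu = 1) (htau : H.tau = 2) :
    IsHomeBase H := by
  have hI := TriSys.isIntersecting_of_nu_le_one hnu.le
  have hτ := TriSys.noCoveringVertex_of_one_lt_tau (htau ▸ one_lt_two)
  obtain ⟨e, he⟩ := TriSys.exists_mem_edges_of_tau_pos (htau ▸ two_pos)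
  rcases TriSys.hasSingleHomeBlock_of_isIntersecting hI hτ he with
    ⟨_, _, _, hR⟩ | ⟨_, _, _, _, _, _, hF⟩
  · exact TriSys.isHomeBase_of_isHomeTriple hnu hτ hR
  · exact TriSys.isHomeBase_of_isFanoOn hnu hF
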